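/- Value-difference bound via policy total variation: for any policies π₁ and π₂, (1−γ) |V(π₁) − V(π₂)| ≤ 2 (max_{a∈A, s∈S} |A^{π₂}(a,s)|) · Σ_{s∈S} d^{π₁,ν}(s) D_TV(π₁(·|s), π₂(·|s)). -/

import Mathlib

namespace VEPO

variable {S A : Type} [Fintype S] [Fintype A] [DecidableEq S] [DecidableEq A]

/-- A probability mass function on a finite type, represented as a real-valued function. -/
def IsPMF {X : Type} [Fintype X] (f : X → ℝ) : Prop :=
  (∀ x, 0 ≤ f x) ∧ ∑ x : X, f x = 1

/-- A transition kernel: for each action-state pair `(a, s)`, a pmf `p a s` on next states. -/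
def IsKernel (p : A → S → S → ℝ) : Prop := ∀ a s, IsPMF (p a s)

/-- A policy: for each state `s`, a pmf `π s` on actions. -/
def IsPolicy (π : S → A → ℝ) : Prop := ∀ s, IsPMF (π s)

/-- The `t`-step visitation probability `p_t^π(s' | a, s)`. -/
def visit (p : A → S → S → ℝ) (π : S → A → ℝ) : ℕ → A → S → S → ℝ
  | 0, _, s, s' => if s' = s then 1 else 0
  | 1, a, s, s' => p a s s'
  | (t + 2), a, s, s' =>
      ∑ s'' : S, visit p π (t + 1) a s s'' * ∑ a'' : A, π s'' a'' * p a'' s'' s'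

/-- The Q-function `Q^π(a, s)`. -/
noncomputable def Qfun (p : A → S → S → ℝ) (r : S → A → ℝ) (γ : ℝ)
    (π : S → A → ℝ) (a : A) (s : S) : ℝ :=
  r s a + ∑' t : ℕ, γ ^ (t + 1) *
    ∑ s' : S, visit p π (t + 1) a s s' * ∑ a' : A, π s' a' * r s' a'

/-- The value function `V^π(s)`. -/
noncomputable def Vfun (p : A → S → S → ℝ) (r : S → A → ℝ) (γ : ℝ)
    (π : S → A → ℝ) (s : S) : ℝ :=
  ∑ a : A, π s a * Qfun p r γ π a s

/-- The advantage function `A^π(a, s)`. -/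
noncomputable def Adv (p : A → S → S → ℝ) (r : S → A → ℝ) (γ : ℝ)
    (π : S → A → ℝ) (a : A) (s : S) : ℝ :=
  Qfun p r γ π a s - Vfun p r γ π s

/-- The conditional discounted visitation probability `d^π(s' | a, s)`. -/
noncomputable def dvisit (p : A → S → S → ℝ) (γ : ℝ) (π : S → A → ℝ)
    (s' : S) (a : A) (s : S) : ℝ :=
  (1 - γ) * ∑' t : ℕ, γ ^ t * visit p π t a s s'

/-- The integrated discounted visitation probability `d^{π,ν}(s')`. -/
noncomputable def dnu (p : A → S → S → ℝ) (γ : ℝ) (ν : S → ℝ)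
    (π : S → A → ℝ) (s' : S) : ℝ :=
  ∑ s : S, ∑ a : A, π s a * ν s * dvisit p γ π s' a s

/-- The integrated value `V(π) = Σ_s ν(s) V^π(s)`. -/
noncomputable def IntV (p : A → S → S → ℝ) (r : S → A → ℝ) (γ : ℝ) (ν : S → ℝ)
    (π : S → A → ℝ) : ℝ :=
  ∑ s : S, ν s * Vfun p r γ π s

/-- The first-order term `η₁(π₁, π₂)`. -/
noncomputable def eta1 (p : A → S → S → ℝ) (r : S → A → ℝ) (γ : ℝ) (ν : S → ℝ)
    (π₁ π₂ : S → A → ℝ) : ℝ :=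
  ∑ a : A, ∑ s : S, π₁ s a * Adv p r γ π₂ a s * dnu p γ ν π₂ s

/-- The higher-order remainder `η₂(π₁, π₂)`. -/
noncomputable def eta2 (p : A → S → S → ℝ) (r : S → A → ℝ) (γ : ℝ) (ν : S → ℝ)
    (π₁ π₂ : S → A → ℝ) : ℝ :=
  ∑ a : A, ∑ s : S, (π₁ s a - π₂ s a) * Adv p r γ π₂ a s *
    (dnu p γ ν π₁ s - dnu p γ ν π₂ s)

/-- Total variation distance between two pmfs on a finite type. -/
noncomputable def DTV {X : Type} [Fintype X] (μ₁ μ₂ : X → ℝ) : ℝ :=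
  (1 / 2) * ∑ x : X, |μ₁ x - μ₂ x|

/-- Kullback–Leibler divergence between two pmfs on a finite type, valued in `EReal`
(equal to `⊤` if `μ₁` is not absolutely continuous w.r.t. `μ₂`). -/
noncomputable def DKL {X : Type} [Fintype X] (μ₁ μ₂ : X → ℝ) : EReal :=
  ∑ x : X, (if μ₁ x = 0 then (0 : EReal)
    else if μ₂ x = 0 then (⊤ : EReal)
    else ((μ₁ x * Real.log (μ₁ x / μ₂ x) : ℝ) : EReal))

/-- Conditional discounted stationary probability ratio `ω^π(a', s'; a, s)`. -/
noncomputable def ratio (p : A → S → S → ℝ) (γ : ℝ) (pinf : A → S → ℝ)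
    (π : S → A → ℝ) (a' : A) (s' : S) (a : A) (s : S) : ℝ :=
  (1 - γ) * ((if a' = a ∧ s' = s then 1 else 0) +
    ∑' t : ℕ, γ ^ (t + 1) * (π s' a' * visit p π (t + 1) a s s')) / pinf a' s'

/-- Integrated discounted stationary probability ratio `ω^{π,ν}(a', s')`. -/
noncomputable def rationu (p : A → S → S → ℝ) (γ : ℝ) (pinf : A → S → ℝ) (ν : S → ℝ)
    (π : S → A → ℝ) (a' : A) (s' : S) : ℝ :=
  ∑ a : A, ∑ s : S, π s a * ν s * ratio p γ pinf π a' s' a s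

/-- Marginal state distribution `p̄_t^{π,ν}` at time `t` when `S₀ ~ ν` and actions follow `π`. -/
def marg (p : A → S → S → ℝ) (π : S → A → ℝ) (ν : S → ℝ) : ℕ → S → ℝ
  | 0, s' => ν s'
  | (t + 1), s' => ∑ s : S, marg p π ν t s * ∑ a : A, π s a * p a s s'

/-- Conditional discounted state–action visitation `q^π(a', s'; a, s)`. -/
noncomputable def qvisit (p : A → S → S → ℝ) (γ : ℝ) (π : S → A → ℝ)
    (a' : A) (s' : S) (a : A) (s : S) : ℝ :=
  (1 - γ) * ((if a' = a ∧ s' = s then 1 else 0) +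
    ∑' t : ℕ, γ ^ (t + 1) * (π s' a' * visit p π (t + 1) a s s'))

/-- The estimating function `ψ(o) = ψ₁ + ψ₂(o) + ψ₃(o)` evaluated at a data tuple
`o = (s, a, rr, s')`, for nuisance functions `Ṽ = Vt`, `Ã = At`, `ω̃ = ωt`
(with `ωt a' s' a s = ω̃(a',s'; a,s)`) and `d̃ = dt` (with `dt s* a s = d̃(s* | a, s)`). -/
noncomputable def psi (γ : ℝ) (ν : S → ℝ) (π πold : S → A → ℝ)
    (Vt : S → ℝ) (At : A → S → ℝ) (ωt : A → S → A → S → ℝ) (dt : S → A → S → ℝ)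
    (s : S) (a : A) (rr : ℝ) (s' : S) : ℝ :=
  let dtnu : S → ℝ := fun sstar => ∑ a0 : A, ∑ s0 : S, πold s0 a0 * ν s0 * dt sstar a0 s0
  let ωtnu : A → S → ℝ := fun a1 s1 => ∑ a0 : A, ∑ s0 : S, πold s0 a0 * ν s0 * ωt a1 s1 a0 s0
  (∑ sstar : S, dtnu sstar * ∑ astar : A, π sstar astar * At astar sstar)
  + (1 / (1 - γ)) * ∑ sstar : S, dtnu sstar * ∑ astar : A,
      (π sstar astar - πold sstar astar) * ωt a s astar sstar *
        (rr + γ * Vt s' - Vt s - At a s)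
  + (ωtnu a s / (1 - γ)) * ∑ astar : A,
      (γ * ∑ a' : A, πold s' a' * ∑ sstar : S, dt sstar a' s' * π sstar astar * At astar sstar
       - ∑ sstar : S, dt sstar a s * π sstar astar * At astar sstar
       + (1 - γ) * π s astar * At astar s)

/-- The expectation `E[ψ(O)]` of the estimating function, where `(A₀, S₀) ~ p_∞`,
`S₁ | (A₀, S₀) ~ p(· | A₀, S₀)` and `E[R₀ | A₀, S₀] = r(S₀, A₀)`;  since `ψ` is affine
in its reward argument with a coefficient not depending on `s'`, this finite sum is
exactly the expectation of `ψ(O)`. -/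
noncomputable def Epsi (p : A → S → S → ℝ) (r : S → A → ℝ) (γ : ℝ) (ν : S → ℝ)
    (pinf : A → S → ℝ) (π πold : S → A → ℝ)
    (Vt : S → ℝ) (At : A → S → ℝ) (ωt : A → S → A → S → ℝ) (dt : S → A → S → ℝ) : ℝ :=
  ∑ a : A, ∑ s : S, pinf a s * ∑ s' : S, p a s s' *
    psi γ ν π πold Vt At ωt dt s a (r s a) s'

end VEPO

/-! Let `P` be the state transition matrix of `π₁` and `R = ∑ₜ γᵗ Pᵗ = (1 - γ P)⁻¹`. The
Bellman equations give `V^{π₁} - V^{π₂} = f + γ P (V^{π₁} - V^{π₂})` with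
`f(s) = ∑ₐ π₁(a|s) A^{π₂}(a,s)`, so `ν ⬝ (V^{π₁} - V^{π₂}) = (ν R) ⬝ f`, and `(1 - γ) ν R` is
`d^{π₁,ν}` (the performance difference lemma). As `∑ₐ π₂(a|s) A^{π₂}(a,s) = 0`, also
`f(s) = ∑ₐ (π₁ - π₂)(a|s) A^{π₂}(a,s)`, which is at most
`2 max |A^{π₂}| D_TV(π₁(·|s), π₂(·|s))` in absolute value. -/

namespace VEPO

open Matrix

section Resolvent

variable {n : Type*} [Fintype n] [DecidableEq n] {P : Matrix n n ℝ} {γ : ℝ}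

noncomputable def discountedResolvent (γ : ℝ) (P : Matrix n n ℝ) : Matrix n n ℝ :=
  ∑' t : ℕ, γ ^ t • P ^ t

theorem summable_pow_smul_pow_of_mem_rowStochastic (hP : P ∈ rowStochastic ℝ n) (hγ0 : 0 ≤ γ)
    (hγ1 : γ < 1) : Summable fun t : ℕ => γ ^ t • P ^ t := by
  refine Pi.summable.2 fun i => Pi.summable.2 fun j => ?_
  have hPt := pow_mem hP
  refine (summable_geometric_of_lt_one hγ0 hγ1).of_nonneg_of_le (fun t => ?_) (fun t => ?_)
  · exact mul_nonneg (pow_nonneg hγ0 t) (nonneg_of_mem_rowStochastic (hPt t))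
  · exact mul_le_of_le_one_right (pow_nonneg hγ0 t) (le_one_of_mem_rowStochastic (hPt t))

theorem discountedResolvent_apply (h : Summable fun t : ℕ => γ ^ t • P ^ t) (i j : n) :
    discountedResolvent γ P i j = ∑' t : ℕ, γ ^ t * (P ^ t) i j :=
  (congrFun (tsum_apply h) j).trans (tsum_apply (Pi.summable.1 h i))

theorem discountedResolvent_nonneg (hP : P ∈ rowStochastic ℝ n) (hγ0 : 0 ≤ γ) (hγ1 : γ < 1)
    (i j : n) : 0 ≤ discountedResolvent γ P i j := by
  rw [discountedResolvent_apply (summable_pow_smul_pow_of_mem_rowStochastic hP hγ0 hγ1)]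
  exact tsum_nonneg fun t =>
    mul_nonneg (pow_nonneg hγ0 t) (nonneg_of_mem_rowStochastic (pow_mem hP t))

theorem discountedResolvent_eq_one_add_mul (h : Summable fun t : ℕ => γ ^ t • P ^ t) :
    discountedResolvent γ P = 1 + γ • (P * discountedResolvent γ P) := by
  have hshift : ∀ t : ℕ, γ ^ (t + 1) • P ^ (t + 1) = γ • (P * (γ ^ t • P ^ t)) := fun t => by
    rw [mul_smul_comm, smul_smul, ← pow_succ', ← pow_succ']
  nth_rw 1 [discountedResolvent]
  rw [h.tsum_eq_zero_add, pow_zero, pow_zero, one_smul]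
  simp only [hshift]
  rw [(h.mul_left P).tsum_const_smul, h.tsum_mul_left]
  rfl

theorem discountedResolvent_mul_one_sub (h : Summable fun t : ℕ => γ ^ t • P ^ t) :
    discountedResolvent γ P * (1 - γ • P) = 1 := by
  have hshift : ∀ t : ℕ, γ ^ (t + 1) • P ^ (t + 1) = γ • ((γ ^ t • P ^ t) * P) := fun t => by
    rw [smul_mul_assoc, smul_smul, ← pow_succ', ← pow_succ]
  have hR : discountedResolvent γ P = 1 + γ • (discountedResolvent γ P * P) := by
    nth_rw 1 [discountedResolvent]
    rw [h.tsum_eq_zero_add, pow_zero, pow_zero, one_smul]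
    simp only [hshift]
    rw [(h.mul_right P).tsum_const_smul, h.tsum_mul_right]
    rfl
  rw [mul_sub, mul_one, mul_smul_comm]
  nth_rw 1 [hR]
  abel

end Resolvent

theorem dotProduct_tsum_mulVec {ι m n : Type*} [Fintype m] [Fintype n] {f : ι → Matrix m n ℝ}
    (hf : Summable f) (v : m → ℝ) (w : n → ℝ) :
    v ⬝ᵥ ((∑' t, f t) *ᵥ w) = ∑' t, v ⬝ᵥ (f t *ᵥ w) :=
  hf.map_tsum
    ({ toFun := fun M => v ⬝ᵥ (M *ᵥ w)
       map_zero' := by simp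
       map_add' := fun M N => by simp [add_mulVec, dotProduct_add] } : Matrix m n ℝ →+ ℝ)
    (continuous_const.dotProduct (continuous_id.matrix_mulVec continuous_const))

theorem dotProduct_eq_vecMul_dotProduct_of_eq_add {n : Type*} [Fintype n] [DecidableEq n]
    {R P : Matrix n n ℝ} {γ : ℝ} (hR : R * (1 - γ • P) = 1) {D f : n → ℝ}
    (hD : D = f + γ • (P *ᵥ D)) (ν : n → ℝ) : ν ⬝ᵥ D = (ν ᵥ* R) ⬝ᵥ f := by
  have hf : (1 - γ • P) *ᵥ D = f := by
    rw [sub_mulVec, one_mulVec, smul_mulVec]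
    exact sub_eq_of_eq_add hD
  calc ν ⬝ᵥ D = ν ⬝ᵥ ((R * (1 - γ • P)) *ᵥ D) := by rw [hR, one_mulVec]
    _ = (ν ᵥ* R) ⬝ᵥ f := by rw [← mulVec_mulVec, dotProduct_mulVec, hf]

theorem IsPMF.le_one {X : Type} [Fintype X] {f : X → ℝ} (hf : IsPMF f) (x : X) : f x ≤ 1 :=
  (Finset.single_le_sum (fun y _ => hf.1 y) (Finset.mem_univ x)).trans_eq hf.2

theorem abs_sum_sub_mul_le_two_mul_DTV {X : Type} [Fintype X] (μ₁ μ₂ h : X → ℝ) {M : ℝ}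
    (hM : ∀ x, |h x| ≤ M) : |∑ x, (μ₁ x - μ₂ x) * h x| ≤ 2 * M * DTV μ₁ μ₂ :=
  calc |∑ x, (μ₁ x - μ₂ x) * h x| ≤ ∑ x, |μ₁ x - μ₂ x| * M := by
        refine (Finset.abs_sum_le_sum_abs _ _).trans (Finset.sum_le_sum fun x _ => ?_)
        rw [abs_mul]
        exact mul_le_mul_of_nonneg_left (hM x) (abs_nonneg _)
    _ = 2 * M * DTV μ₁ μ₂ := by rw [DTV, ← Finset.sum_mul]; ring

variable {S A : Type} [Fintype S] [Fintype A]
  {p : A → S → S → ℝ} {r : S → A → ℝ} {γ : ℝ} {π : S → A → ℝ}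

def transitionMatrix (p : A → S → S → ℝ) (π : S → A → ℝ) : Matrix S S ℝ :=
  Matrix.of fun s s' => ∑ a, π s a * p a s s'

def policyReward (r : S → A → ℝ) (π : S → A → ℝ) : S → ℝ :=
  fun s => ∑ a, π s a * r s a

theorem transitionMatrix_mulVec_apply (v : S → ℝ) (s : S) :
    (transitionMatrix p π *ᵥ v) s = ∑ a, π s a * (p a s ⬝ᵥ v) := by
  simp only [transitionMatrix, mulVec, dotProduct, of_apply, Finset.mul_sum, Finset.sum_mul]
  rw [Finset.sum_comm]
  exact Finset.sum_congr rfl fun a _ => Finset.sum_congr rfl fun s' _ => by ring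

variable [DecidableEq S]

theorem transitionMatrix_mem_rowStochastic (hp : IsKernel p) (hπ : IsPolicy π) :
    transitionMatrix p π ∈ rowStochastic ℝ S := by
  refine mem_rowStochastic_iff_sum.2 ⟨fun s s' => ?_, fun s => ?_⟩
  · exact Finset.sum_nonneg fun a _ => mul_nonneg ((hπ s).1 a) ((hp a s).1 s')
  · simp only [transitionMatrix, of_apply]
    rw [Finset.sum_comm]
    simp only [← Finset.mul_sum, (hp _ s).2, mul_one, (hπ s).2]

theorem visit_succ_eq_vecMul (t : ℕ) (a : A) (s : S) :
    visit p π (t + 1) a s = p a s ᵥ* transitionMatrix p π ^ t := by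
  induction t with
  | zero => rw [pow_zero, vecMul_one]; rfl
  | succ t ih =>
    rw [pow_succ, ← vecMul_vecMul, ← ih]
    rfl

theorem sum_mul_visit_eq_pow (hπ : IsPolicy π) (t : ℕ) (s s' : S) :
    ∑ a, π s a * visit p π t a s s' = (transitionMatrix p π ^ t) s s' := by
  cases t with
  | zero =>
    simp only [visit, pow_zero, one_apply, ← Finset.sum_mul, (hπ s).2, one_mul]
    exact if_congr eq_comm rfl rfl
  | succ t =>
    simp only [visit_succ_eq_vecMul, pow_succ', mul_apply, vecMul, dotProduct, Finset.mul_sum]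
    rw [Finset.sum_comm]
    simp only [transitionMatrix, of_apply, Finset.sum_mul, mul_assoc]

theorem summable_pow_smul_transitionMatrix_pow (hp : IsKernel p) (hπ : IsPolicy π)
    (hγ0 : 0 ≤ γ) (hγ1 : γ < 1) : Summable fun t : ℕ => γ ^ t • transitionMatrix p π ^ t :=
  summable_pow_smul_pow_of_mem_rowStochastic (transitionMatrix_mem_rowStochastic hp hπ) hγ0 hγ1

theorem isPMF_visit (hp : IsKernel p) (hπ : IsPolicy π) (t : ℕ) (a : A) (s : S) :
    IsPMF (visit p π t a s) := by
  cases t with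
  | zero => exact ⟨fun s' => by simp only [visit]; positivity, by simp [visit]⟩
  | succ t =>
    have hPt := pow_mem (transitionMatrix_mem_rowStochastic hp hπ) t
    rw [visit_succ_eq_vecMul]
    have hsum : p a s ⬝ᵥ 1 = 1 := by simpa [dotProduct] using (hp a s).2
    exact ⟨nonneg_vecMul_of_mem_rowStochastic hPt (hp a s).1,
      by simpa [dotProduct] using vecMul_dotProduct_one_eq_one_rowStochastic hPt hsum⟩

theorem dnu_eq_smul_vecMul_discountedResolvent (ν : S → ℝ) (hp : IsKernel p) (hπ : IsPolicy π)
    (hγ0 : 0 ≤ γ) (hγ1 : γ < 1) :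
    dnu p γ ν π = (1 - γ) • (ν ᵥ* discountedResolvent γ (transitionMatrix p π)) := by
  have hsum : ∀ a s s', Summable fun t => γ ^ t * visit p π t a s s' := fun a s s' =>
    (summable_geometric_of_lt_one hγ0 hγ1).of_nonneg_of_le
      (fun t => mul_nonneg (pow_nonneg hγ0 t) ((isPMF_visit hp hπ t a s).1 s'))
      (fun t => mul_le_of_le_one_right (pow_nonneg hγ0 t)
        ((isPMF_visit hp hπ t a s).le_one s'))
  have hR : ∀ s s', discountedResolvent γ (transitionMatrix p π) s s' =
      ∑ a, π s a * ∑' t, γ ^ t * visit p π t a s s' := fun s s' => by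
    rw [discountedResolvent_apply (summable_pow_smul_transitionMatrix_pow hp hπ hγ0 hγ1)]
    simp only [← sum_mul_visit_eq_pow hπ, Finset.mul_sum, ← (hsum _ s s').tsum_mul_left]
    rw [← Summable.tsum_finsetSum fun a _ => (hsum a s s').mul_left _]
    exact tsum_congr fun t => Finset.sum_congr rfl fun a _ => by ring
  ext s'
  simp only [dnu, dvisit, Pi.smul_apply, smul_eq_mul, vecMul, dotProduct, hR, Finset.mul_sum]
  exact Finset.sum_congr rfl fun s _ => Finset.sum_congr rfl fun a _ => by ring

theorem dnu_nonneg {ν : S → ℝ} (hν : ∀ s, 0 ≤ ν s) (hp : IsKernel p) (hπ : IsPolicy π)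
    (hγ0 : 0 ≤ γ) (hγ1 : γ < 1) (s' : S) : 0 ≤ dnu p γ ν π s' := by
  rw [dnu_eq_smul_vecMul_discountedResolvent ν hp hπ hγ0 hγ1]
  exact mul_nonneg (sub_nonneg.2 hγ1.le) (Finset.sum_nonneg fun s _ => mul_nonneg (hν s)
    (discountedResolvent_nonneg (transitionMatrix_mem_rowStochastic hp hπ) hγ0 hγ1 s s'))

theorem Qfun_eq_discountedResolvent (hp : IsKernel p) (hπ : IsPolicy π) (hγ0 : 0 ≤ γ)
    (hγ1 : γ < 1) (a : A) (s : S) :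
    Qfun p r γ π a s = r s a +
      γ * (p a s ⬝ᵥ (discountedResolvent γ (transitionMatrix p π) *ᵥ policyReward r π)) := by
  rw [Qfun, discountedResolvent,
    dotProduct_tsum_mulVec (summable_pow_smul_transitionMatrix_pow hp hπ hγ0 hγ1), ← tsum_mul_left]
  congr 1
  refine tsum_congr fun t => ?_
  rw [smul_mulVec, dotProduct_smul, dotProduct_mulVec, ← visit_succ_eq_vecMul, smul_eq_mul,
    pow_succ]
  simp only [dotProduct, policyReward]
  ring

theorem Vfun_eq_discountedResolvent_mulVec (hp : IsKernel p) (hπ : IsPolicy π) (hγ0 : 0 ≤ γ)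
    (hγ1 : γ < 1) :
    Vfun p r γ π = discountedResolvent γ (transitionMatrix p π) *ᵥ policyReward r π := by
  have hR :=
    discountedResolvent_eq_one_add_mul (summable_pow_smul_transitionMatrix_pow hp hπ hγ0 hγ1)
  set R := discountedResolvent γ (transitionMatrix p π)
  ext s
  calc Vfun p r γ π s = ∑ a, π s a * (r s a + γ * (p a s ⬝ᵥ (R *ᵥ policyReward r π))) :=
        Finset.sum_congr rfl fun a _ => by rw [Qfun_eq_discountedResolvent hp hπ hγ0 hγ1]
    _ = policyReward r π s + γ * (transitionMatrix p π *ᵥ (R *ᵥ policyReward r π)) s := by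
        simp only [mul_add, Finset.sum_add_distrib, transitionMatrix_mulVec_apply, Finset.mul_sum,
          policyReward]
        exact congrArg _ (Finset.sum_congr rfl fun a _ => by ring)
    _ = (R *ᵥ policyReward r π) s := by
        nth_rw 2 [hR]
        rw [add_mulVec, one_mulVec, smul_mulVec, mulVec_mulVec]
        rfl

theorem Qfun_bellman (hp : IsKernel p) (hπ : IsPolicy π) (hγ0 : 0 ≤ γ) (hγ1 : γ < 1)
    (a : A) (s : S) : Qfun p r γ π a s = r s a + γ * (p a s ⬝ᵥ Vfun p r γ π) := by
  rw [Vfun_eq_discountedResolvent_mulVec hp hπ hγ0 hγ1]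
  exact Qfun_eq_discountedResolvent hp hπ hγ0 hγ1 a s

theorem sum_mul_Adv_self (hπ : IsPolicy π) (s : S) : ∑ a, π s a * Adv p r γ π a s = 0 := by
  simp only [Adv, mul_sub, Finset.sum_sub_distrib, ← Finset.sum_mul, (hπ s).2, one_mul]
  exact sub_self _

theorem Vfun_sub_Vfun_eq_add_smul_mulVec (hp : IsKernel p) (hγ0 : 0 ≤ γ) (hγ1 : γ < 1)
    {π₁ π₂ : S → A → ℝ} (h1 : IsPolicy π₁) (h2 : IsPolicy π₂) :
    Vfun p r γ π₁ - Vfun p r γ π₂ = (fun s => ∑ a, π₁ s a * Adv p r γ π₂ a s) +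
      γ • (transitionMatrix p π₁ *ᵥ (Vfun p r γ π₁ - Vfun p r γ π₂)) := by
  ext s
  calc Vfun p r γ π₁ s - Vfun p r γ π₂ s
      = ∑ a, π₁ s a * (Qfun p r γ π₁ a s - Vfun p r γ π₂ s) := by
        simp only [mul_sub, Finset.sum_sub_distrib, ← Finset.sum_mul, (h1 s).2, one_mul]
        rfl
    _ = ∑ a, (π₁ s a * Adv p r γ π₂ a s +
          γ * (π₁ s a * (p a s ⬝ᵥ (Vfun p r γ π₁ - Vfun p r γ π₂)))) :=
        Finset.sum_congr rfl fun a _ => by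
          rw [Adv, Qfun_bellman hp h1 hγ0 hγ1, Qfun_bellman hp h2 hγ0 hγ1, dotProduct_sub]
          ring
    _ = _ := by
        rw [Finset.sum_add_distrib, ← Finset.mul_sum, ← transitionMatrix_mulVec_apply]
        rfl

theorem performance_difference (ν : S → ℝ) (hp : IsKernel p) (hγ0 : 0 ≤ γ) (hγ1 : γ < 1)
    {π₁ π₂ : S → A → ℝ} (h1 : IsPolicy π₁) (h2 : IsPolicy π₂) :
    (1 - γ) * (IntV p r γ ν π₁ - IntV p r γ ν π₂) =
      ∑ s, dnu p γ ν π₁ s * ∑ a, π₁ s a * Adv p r γ π₂ a s := by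
  have h := dotProduct_eq_vecMul_dotProduct_of_eq_add
    (discountedResolvent_mul_one_sub (summable_pow_smul_transitionMatrix_pow hp h1 hγ0 hγ1))
    (Vfun_sub_Vfun_eq_add_smul_mulVec (r := r) hp hγ0 hγ1 h1 h2) ν
  rw [dnu_eq_smul_vecMul_discountedResolvent ν hp h1 hγ0 hγ1]
  change (1 - γ) * (ν ⬝ᵥ Vfun p r γ π₁ - ν ⬝ᵥ Vfun p r γ π₂) = _ ⬝ᵥ _
  rw [← dotProduct_sub, h, smul_dotProduct, smul_eq_mul]

theorem value_difference_tv_bound_general {S A : Type} [Fintype S] [Fintype A] [DecidableEq S]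
    [Nonempty S] [Nonempty A]
    (p : A → S → S → ℝ) (r : S → A → ℝ) (γ : ℝ) (ν : S → ℝ)
    (hp : IsKernel p)
    (hγ0 : 0 ≤ γ) (hγ1 : γ < 1) (hν : IsPMF ν)
    (π₁ π₂ : S → A → ℝ) (h1 : IsPolicy π₁) (h2 : IsPolicy π₂) :
    (1 - γ) * |IntV p r γ ν π₁ - IntV p r γ ν π₂| ≤
      2 * (Finset.univ.sup' Finset.univ_nonempty
            (fun as : A × S => |Adv p r γ π₂ as.1 as.2|)) *
        ∑ s : S, dnu p γ ν π₁ s * DTV (π₁ s) (π₂ s) := by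
  set M := Finset.univ.sup' Finset.univ_nonempty fun as : A × S => |Adv p r γ π₂ as.1 as.2|
  have hf : ∀ s, |∑ a, π₁ s a * Adv p r γ π₂ a s| ≤ 2 * M * DTV (π₁ s) (π₂ s) := fun s => by
    have := abs_sum_sub_mul_le_two_mul_DTV (M := M) (π₁ s) (π₂ s) (fun a => Adv p r γ π₂ a s)
      fun a => Finset.le_sup' (fun as : A × S => |Adv p r γ π₂ as.1 as.2|)
        (Finset.mem_univ (a, s))
    simpa only [sub_mul, Finset.sum_sub_distrib, sum_mul_Adv_self h2, sub_zero] using this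
  rw [← abs_of_nonneg (sub_nonneg.2 hγ1.le), ← abs_mul,
    performance_difference ν hp hγ0 hγ1 h1 h2, Finset.mul_sum]
  refine (Finset.abs_sum_le_sum_abs _ _).trans (Finset.sum_le_sum fun s _ => ?_)
  have hd := dnu_nonneg hν.1 hp h1 hγ0 hγ1 s
  rw [abs_mul, abs_of_nonneg hd, mul_left_comm]
  exact mul_le_mul_of_nonneg_left (hf s) hd

theorem value_difference_tv_bound {S A : Type} [Fintype S] [Fintype A] [DecidableEq S] [DecidableEq A]
    [Nonempty S] [Nonempty A]
    (p : A → S → S → ℝ) (r : S → A → ℝ) (γ : ℝ) (ν : S → ℝ) (Rmax : ℝ)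
    (hp : IsKernel p) (hr : ∀ s a, |r s a| ≤ Rmax)
    (hγ0 : 0 ≤ γ) (hγ1 : γ < 1) (hν : IsPMF ν)
    (π₁ π₂ : S → A → ℝ) (h1 : IsPolicy π₁) (h2 : IsPolicy π₂) :
    (1 - γ) * |IntV p r γ ν π₁ - IntV p r γ ν π₂| ≤
      2 * (Finset.univ.sup' Finset.univ_nonempty
            (fun as : A × S => |Adv p r γ π₂ as.1 as.2|)) *
        ∑ s : S, dnu p γ ν π₁ s * DTV (π₁ s) (π₂ s) :=
  value_difference_tv_bound_general p r γ ν hp hγ0 hγ1 hν π₁ π₂ h1 h2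

end VEPO
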